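/- Let $a, b$ be reals with $0 < b < a$, let $1/2 < q_w \le q_b \le 1$, and let $m \ge 3$ be an odd integer. Then $(2q_b-1)a - (2q_w-1)b > 0$, $(2M_m(q_b)-1)a - (2M_m(q_w)-1)b > 0$, and $\dfrac{(2M_m(q_b)-1)\,a - (2M_m(q_w)-1)\,b}{(2q_b-1)\,a - (2q_w-1)\,b} \le \sqrt{m}$. -/

import Mathlib

/-- `majVote m q` is the probability that a strict majority of `m` independent
Bernoulli(`q`) voters is correct: `∑_{j > m/2} C(m,j) q^j (1-q)^(m-j)`.
For odd `m`, the lower summation bound `m/2 + 1` equals `(m+1)/2`. -/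
noncomputable def majVote (m : ℕ) (q : ℝ) : ℝ :=
  ∑ j ∈ Finset.Ico (m / 2 + 1) (m + 1), (m.choose j : ℝ) * q ^ j * (1 - q) ^ (m - j)

/-- `sigmaFun m q = ∑_{k odd, 1 ≤ k ≤ m-2} C(k, (k+1)/2) (q(1-q))^((k+1)/2)`. -/
noncomputable def sigmaFun (m : ℕ) (q : ℝ) : ℝ :=
  ∑ k ∈ (Finset.Icc 1 (m - 2)).filter (fun k => k % 2 = 1),
    (k.choose ((k + 1) / 2) : ℝ) * q ^ ((k + 1) / 2) * (1 - q) ^ ((k + 1) / 2)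


lemma succ_choose (n : ℕ) : (n+1) * Nat.choose (2*n+1) (n+1) = (2*n+1) * Nat.choose (2*n) n := by
  have := Nat.add_one_mul_choose_eq (2*n) n
  linarith

lemma central_identity (n : ℕ) :
    (n+1) * Nat.choose (2*(n+1)) (n+1) = 2 * ((2*n+1) * Nat.choose (2*n) n) := by
  have hs : Nat.choose (2*n+1) n = Nat.choose (2*n+1) (n+1) := by
    have h := Nat.choose_symm (n := 2*n+1) (k := n+1) (by omega)
    simpa [show 2*n+1-(n+1) = n by omega] using h
  have h1 : Nat.choose (2*(n+1)) (n+1) = 2 * Nat.choose (2*n+1) (n+1) := by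
    have := Nat.choose_succ_succ (2*n+1) n
    have h2 : 2*(n+1) = (2*n+1)+1 := by ring
    rw [h2, this, hs]; ring
  rw [h1, show (n+1) * (2 * Nat.choose (2*n+1) (n+1)) = 2*((n+1) * Nat.choose (2*n+1) (n+1)) from by ring, succ_choose]

lemma central_sq (n : ℕ) : (2*n+1) * (Nat.choose (2*n) n)^2 ≤ 16^n := by
  induction n with
  | zero => simp
  | succ n ih =>
    have hid := central_identity n
    have hpos : 0 < (n+1)^2 := by positivity
    have h2 : ((n+1) * Nat.choose (2*(n+1)) (n+1))^2 = (2 * ((2*n+1) * Nat.choose (2*n) n))^2 := by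
      rw [hid]
    have key : ((2*(n+1)+1) * (Nat.choose (2*(n+1)) (n+1))^2) * (n+1)^2 ≤ 16^(n+1) * (n+1)^2 := by
      calc ((2*(n+1)+1) * (Nat.choose (2*(n+1)) (n+1))^2) * (n+1)^2
          = (2*n+3) * ((n+1) * Nat.choose (2*(n+1)) (n+1))^2 := by ring
        _ = (2*n+3) * (2 * ((2*n+1) * Nat.choose (2*n) n))^2 := by rw [h2]
        _ = (2*n+3) * (2*n+1) * 4 * ((2*n+1) * (Nat.choose (2*n) n)^2) := by ring
        _ ≤ (2*n+3) * (2*n+1) * 4 * 16^n := Nat.mul_le_mul_left _ ih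
        _ ≤ 16^(n+1) * (n+1)^2 := by
            have h3 : (2*n+3) * (2*n+1) * 4 ≤ 16 * (n+1)^2 := by nlinarith
            calc (2*n+3)*(2*n+1)*4 * 16^n ≤ 16*(n+1)^2 * 16^n := Nat.mul_le_mul_right _ h3
              _ = 16^(n+1) * (n+1)^2 := by ring
    exact Nat.le_of_mul_le_mul_right key hpos

lemma majVote_hasDerivAt (n : ℕ) (q : ℝ) :
    HasDerivAt (majVote (2*n+1))
      (((2*n+1) * Nat.choose (2*n) n : ℕ) * (q*(1-q))^n) q := by
  set m := 2*n+1 with hm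
  set T : ℕ → ℝ := fun j => (j : ℝ) * (m.choose j : ℝ) * q^(j-1) * (1-q)^(m-j) with hT
  have hterm : ∀ j ∈ Finset.Ico (m/2+1) (m+1),
      HasDerivAt (fun x : ℝ => (m.choose j : ℝ) * x ^ j * (1-x) ^ (m-j)) (T j - T (j+1)) q := by
    intro j hj
    simp only [Finset.mem_Ico] at hj
    have hjm : j ≤ m := by omega
    have h1 : HasDerivAt (fun x : ℝ => x^j) ((j:ℝ)*q^(j-1)) q := hasDerivAt_pow j q
    have h0 : HasDerivAt (fun x : ℝ => 1 - x) (-1) q := (hasDerivAt_id q).const_sub 1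
    have h2 : HasDerivAt (fun x : ℝ => (1-x)^(m-j))
        (((m-j : ℕ):ℝ)*(1-q)^(m-j-1)*(-1)) q := h0.pow (m-j)
    have h3 := (h1.mul h2).const_mul (m.choose j : ℝ)
    have heq : (m.choose j : ℝ) * ((j:ℝ)*q^(j-1) * (1-q)^(m-j) + q^j * (((m-j:ℕ):ℝ)*(1-q)^(m-j-1)*(-1)))
        = T j - T (j+1) := by
      have hc : ((Nat.choose m (j+1) * (j+1) : ℕ) : ℝ) = ((Nat.choose m j * (m - j) : ℕ) : ℝ) := by
        exact_mod_cast congrArg (Nat.cast : ℕ → ℝ) (Nat.choose_succ_right_eq m j)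
      push_cast at hc
      simp only [hT]
      rcases eq_or_lt_of_le hjm with hjeq | hjlt
      · subst hjeq
        simp [Nat.choose_succ_self, Nat.sub_self]
      · have hj1 : (j+1) - 1 = j := by omega
        have hmj1 : m - (j+1) = m - j - 1 := by omega
        have hme : m - j = (m - j - 1) + 1 := by omega
        rw [hj1, hmj1]
        rw [hme] at hc ⊢
        push_cast at hc ⊢
        linear_combination (q^j * (1-q)^(m-j-1)) * hc
    exact heq ▸ (by simpa [mul_assoc] using h3)
  have hsum := HasDerivAt.sum hterm
  have htel : ∑ j ∈ Finset.Ico (m/2+1) (m+1), (T j - T (j+1)) = T (m/2+1) - T (m+1) := by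
    rw [Finset.sum_Ico_eq_sum_range]
    have : ∀ i, T (m/2+1+i) - T (m/2+1+i+1) = (fun i => T (m/2+1+i)) i - (fun i => T (m/2+1+i)) (i+1) := by
      intro i; simp [add_assoc]
    simp only [this]
    rw [Finset.sum_range_sub' (fun i => T (m/2+1+i))]
    congr 2
    omega
  rw [htel] at hsum
  have hval : T (m/2+1) - T (m+1) = (((2*n+1) * Nat.choose (2*n) n : ℕ):ℝ) * (q*(1-q))^n := by
    have hk : m/2+1 = n+1 := by omega
    have hTm1 : T (m+1) = 0 := by simp [hT, Nat.choose_succ_self]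
    rw [hTm1, sub_zero, hk]
    have h1 : (n+1) - 1 = n := by omega
    have h2 : m - (n+1) = n := by omega
    have hc : (((n+1) * Nat.choose m (n+1) : ℕ) : ℝ) = (((2*n+1) * Nat.choose (2*n) n : ℕ) : ℝ) := by
      exact_mod_cast congrArg (Nat.cast : ℕ → ℝ) (succ_choose n)
    simp only [hT, h1, h2]
    push_cast at hc ⊢
    rw [mul_pow]
    linear_combination (q^n * (1-q)^n) * hc
  rw [hval] at hsum
  have hfun : (∑ i ∈ Finset.Ico (m / 2 + 1) (m + 1), fun x : ℝ => (m.choose i : ℝ) * x ^ i * (1 - x) ^ (m - i)) = majVote m := by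
    ext x; simp [majVote, Finset.sum_apply]
  rw [hfun] at hsum
  exact hsum

lemma choose_tail (n : ℕ) : ∑ j ∈ Finset.Ico (n+1) (2*n+2), Nat.choose (2*n+1) j = 4^n := by
  have h1 : (∑ j ∈ Finset.Ico 0 (n+1), Nat.choose (2*n+1) j)
      + (∑ j ∈ Finset.Ico (n+1) (2*n+2), Nat.choose (2*n+1) j)
      = ∑ j ∈ Finset.Ico 0 (2*n+2), Nat.choose (2*n+1) j :=
    Finset.sum_Ico_consecutive _ (Nat.zero_le _) (by omega)
  have h2 : ∑ j ∈ Finset.Ico 0 (2*n+2), Nat.choose (2*n+1) j = 2^(2*n+1) := by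
    rw [← Finset.range_eq_Ico]
    exact Nat.sum_range_choose (2*n+1)
  have h3 : ∑ j ∈ Finset.Ico 0 (n+1), Nat.choose (2*n+1) j = 4^n := by
    rw [← Finset.range_eq_Ico]
    exact Nat.sum_range_choose_halfway n
  have h4 : (2:ℕ)^(2*n+1) = 2 * 4^n := by
    rw [pow_succ', pow_mul]
    norm_num
  omega

lemma majVote_half (n : ℕ) : majVote (2*n+1) (1/2 : ℝ) = 1/2 := by
  unfold majVote
  have hpt : ∀ j ∈ Finset.Ico ((2*n+1)/2+1) (2*n+1+1),
      ((2*n+1).choose j : ℝ) * (1/2:ℝ)^j * (1-1/2:ℝ)^(2*n+1-j)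
        = ((2*n+1).choose j : ℝ) * (1/2:ℝ)^(2*n+1) := by
    intro j hj
    simp only [Finset.mem_Ico] at hj
    have : (1/2:ℝ)^j * (1-1/2:ℝ)^(2*n+1-j) = (1/2:ℝ)^(2*n+1) := by
      norm_num
      rw [← pow_add]
      congr 1
      omega
    rw [mul_assoc, this]
  rw [Finset.sum_congr rfl hpt, ← Finset.sum_mul]
  have hk : (2*n+1)/2+1 = n+1 := by omega
  have hcast : ∑ j ∈ Finset.Ico ((2*n+1)/2+1) (2*n+1+1), ((2*n+1).choose j : ℝ) = (4:ℝ)^n := by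
    rw [hk]
    rw [show (2*n+1+1) = 2*n+2 from rfl]
    rw [← Nat.cast_sum]
    rw [choose_tail n]
    push_cast
    ring
  rw [hcast]
  rw [show (1/2:ℝ)^(2*n+1) = 1/(2*4^n) from by
    rw [div_pow, one_pow, pow_succ', pow_mul]; norm_num]
  field_simp

lemma D_le_sqrt (n : ℕ) (t : ℝ) (h0 : 0 ≤ t) (h1 : t ≤ 1) :
    (((2*n+1) * Nat.choose (2*n) n : ℕ) : ℝ) * (t*(1-t))^n ≤ Real.sqrt (2*n+1) := by
  set c : ℝ := (((2*n+1) * Nat.choose (2*n) n : ℕ) : ℝ) with hc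
  have hcpos : 0 < c := by
    have h : 0 < (2*n+1) * Nat.choose (2*n) n :=
      Nat.mul_pos (by omega) (Nat.choose_pos (by omega))
    rw [hc]; exact_mod_cast h
  have hx0 : 0 ≤ t*(1-t) := mul_nonneg h0 (by linarith)
  have hx4 : t*(1-t) ≤ 1/4 := by nlinarith [sq_nonneg (t - 1/2)]
  have hp : (t*(1-t))^n ≤ (1/4:ℝ)^n := pow_le_pow_left₀ hx0 hx4 n
  have step1 : c * (t*(1-t))^n ≤ c * (1/4:ℝ)^n :=
    mul_le_mul_of_nonneg_left hp hcpos.le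
  refine step1.trans ?_
  have h16 : (0:ℝ) < 16^n := by positivity
  rw [Real.le_sqrt (by positivity) (by positivity)]
  have hnat : ((2*n+1) * ((2*n+1) * (Nat.choose (2*n) n)^2) : ℕ) ≤ (2*n+1) * 16^n :=
    Nat.mul_le_mul_left _ (central_sq n)
  have hnatR : c^2 ≤ ((2*n+1):ℝ) * 16^n := by
    have := (Nat.cast_le (α := ℝ)).2 hnat
    push_cast at this ⊢
    simp only [hc]
    push_cast
    nlinarith [this]
  have h14 : ((1/4:ℝ)^n)^2 = 1/16^n := by
    rw [← pow_mul, mul_comm, pow_mul]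
    norm_num
    rw [← inv_pow]
    norm_num
  have hq : (c * (1/4:ℝ)^n)^2 = c^2 / 16^n := by
    rw [mul_pow, h14]; ring
  rw [hq, div_le_iff₀ h16]
  exact hnatR

/-- For `0 < b < a`, `1/2 < q_w ≤ q_b ≤ 1` and odd `m ≥ 3`:
both `(2q_b - 1) a - (2q_w - 1) b` and `(2 M_m(q_b) - 1) a - (2 M_m(q_w) - 1) b` are
positive, and their ratio (aggregated over single-label) is at most `√m`. -/
theorem stmt_8 (a b : ℝ) (hb : 0 < b) (hba : b < a)
    (qw qb : ℝ) (hqw : 1 / 2 < qw) (hqwb : qw ≤ qb) (hqb : qb ≤ 1)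
    (m : ℕ) (hm : Odd m) (hm3 : 3 ≤ m) :
    0 < (2 * qb - 1) * a - (2 * qw - 1) * b ∧
    0 < (2 * majVote m qb - 1) * a - (2 * majVote m qw - 1) * b ∧
    ((2 * majVote m qb - 1) * a - (2 * majVote m qw - 1) * b) /
      ((2 * qb - 1) * a - (2 * qw - 1) * b) ≤ Real.sqrt m := by
  obtain ⟨n, hn⟩ := hm
  have hmn : m = 2*n+1 := by omega
  subst hmn
  clear hn
  set c : ℝ := (((2*n+1) * Nat.choose (2*n) n : ℕ) : ℝ) with hc
  set D : ℝ → ℝ := fun t => c * (t*(1-t))^n with hD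
  have hderiv : ∀ q : ℝ, HasDerivAt (majVote (2*n+1)) (D q) q := fun q =>
    majVote_hasDerivAt n q
  have hcont : Continuous D := by
    apply Continuous.mul continuous_const
    exact (continuous_id.mul (continuous_const.sub continuous_id)).pow n
  have hint : ∀ x y : ℝ, IntervalIntegrable D MeasureTheory.volume x y := fun x y =>
    hcont.intervalIntegrable x y
  have hftc : ∀ q : ℝ, ∫ t in (1/2:ℝ)..q, D t = majVote (2*n+1) q - 1/2 := by
    intro q
    rw [intervalIntegral.integral_eq_sub_of_hasDerivAt
      (fun x _ => hderiv x) (hint _ _), majVote_half n]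
  set W : ℝ := ∫ t in (1/2:ℝ)..qw, D t with hW
  set A : ℝ := ∫ t in (1/2:ℝ)..qb, D t with hA
  have hmw : majVote (2*n+1) qw = 1/2 + W := by rw [hW, hftc]; ring
  have hmb : majVote (2*n+1) qb = 1/2 + A := by rw [hA, hftc]; ring
  have hcpos : 0 < c := by
    have h : 0 < (2*n+1) * Nat.choose (2*n) n :=
      Nat.mul_pos (by omega) (Nat.choose_pos (by omega))
    rw [hc]; exact_mod_cast h
  have hWpos : 0 < W := by
    apply intervalIntegral.intervalIntegral_pos_of_pos_on (hint _ _) _ hqw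
    intro t ht
    obtain ⟨ht1, ht2⟩ := ht
    have h0t : 0 < t := by linarith
    have ht1' : t < 1 := by
      rcases lt_or_ge t 1 with h | h
      · exact h
      · linarith
    have : 0 < t*(1-t) := mul_pos h0t (by linarith)
    exact mul_pos hcpos (pow_pos this n)
  have hseg : 0 ≤ ∫ t in qw..qb, D t := by
    apply intervalIntegral.integral_nonneg hqwb
    intro t ht
    obtain ⟨ht1, ht2⟩ := ht
    have : 0 ≤ t*(1-t) := mul_nonneg (by linarith) (by linarith)
    exact mul_nonneg hcpos.le (pow_nonneg this n)
  have hadd : W + (∫ t in qw..qb, D t) = A :=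
    intervalIntegral.integral_add_adjacent_intervals (hint _ _) (hint _ _)
  have hAW : W ≤ A := by linarith
  -- denominator positivity
  have hden : 0 < (2 * qb - 1) * a - (2 * qw - 1) * b := by nlinarith
  refine ⟨hden, ?_, ?_⟩
  · rw [hmw, hmb]
    nlinarith
  · rw [hmw, hmb, div_le_iff₀ hden]
    -- key: b * Pw ≤ a * Pb with P q = √m (q - 1/2) - ∫ D
    set s : ℝ := Real.sqrt ((2*n+1 : ℕ) : ℝ) with hs
    have hDle : ∀ t ∈ Set.Icc (1/2:ℝ) qb, D t ≤ s := by
      intro t ht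
      obtain ⟨ht1, ht2⟩ := ht
      have := D_le_sqrt n t (by linarith) (by linarith)
      rw [hs]
      convert this using 2
      push_cast; ring
    have hsint : ∀ x y : ℝ, IntervalIntegrable (fun t => s - D t) MeasureTheory.volume x y :=
      fun x y => (continuous_const.sub hcont).intervalIntegrable x y
    set Pb : ℝ := ∫ t in (1/2:ℝ)..qb, (s - D t) with hPb
    set Pw : ℝ := ∫ t in (1/2:ℝ)..qw, (s - D t) with hPw
    have hPbv : Pb = s * (qb - 1/2) - A := by
      rw [hPb, intervalIntegral.integral_sub intervalIntegrable_const (hint _ _),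
        intervalIntegral.integral_const, hA]
      simp [smul_eq_mul]; ring
    have hPwv : Pw = s * (qw - 1/2) - W := by
      rw [hPw, intervalIntegral.integral_sub intervalIntegrable_const (hint _ _),
        intervalIntegral.integral_const, hW]
      simp [smul_eq_mul]; ring
    have hPw0 : 0 ≤ Pw := by
      apply intervalIntegral.integral_nonneg (by linarith)
      intro t ht
      have := hDle t ⟨ht.1, le_trans ht.2 hqwb⟩
      linarith
    have hPseg : 0 ≤ ∫ t in qw..qb, (s - D t) := by
      apply intervalIntegral.integral_nonneg hqwb
      intro t ht
      have := hDle t ⟨by linarith [ht.1], ht.2⟩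
      linarith
    have hPadd : Pw + (∫ t in qw..qb, (s - D t)) = Pb :=
      intervalIntegral.integral_add_adjacent_intervals (hsint _ _) (hsint _ _)
    have hPwb : Pw ≤ Pb := by linarith
    have key : b * Pw ≤ a * Pb := by nlinarith
    rw [hPbv, hPwv] at key
    nlinarith [key]
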